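/- arXiv:math/0402272 — 7 statements merged into one kernel-verified Lean document; each statement's English description precedes it below -/
import Mathlib

section
/- Let Q_0, Q_1, …, Q_m be a Clifford system on ℝ^{2l}, and let x ∈ ℝ^{2l} satisfy ⟪Q_i x, x⟫ = 0 for all i = 0, …, m. Then ⟪Q_i (Q_j (Q_k x)), x⟫ = 0 for all i, j, k ∈ {0, 1, …, m}. -/
open scoped RealInnerProductSpace

/-- **Lemma 7.A, part (1).**
Let `Q 0, Q 1, …, Q m` be a Clifford system on `ℝ^(2l)` (symmetric endomorphisms
with `Q i * Q j + Q j * Q i = 2 δᵢⱼ id`), and let `x` satisfy `⟪Q i x, x⟫ = 0` for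
all `i`.  Then `⟪Q i (Q j (Q k x)), x⟫ = 0` for all `i, j, k ∈ {0, …, m}`. -/
theorem stmt1 (l m : ℕ)
    (Q : Fin (m + 1) → Module.End ℝ (EuclideanSpace ℝ (Fin (2 * l))))
    (hsymm : ∀ i, ∀ v w : EuclideanSpace ℝ (Fin (2 * l)), ⟪Q i v, w⟫ = ⟪v, Q i w⟫)
    (hcliff : ∀ i j, Q i * Q j + Q j * Q i =
      if i = j then (2 : ℝ) • (1 : Module.End ℝ (EuclideanSpace ℝ (Fin (2 * l)))) else 0)
    (x : EuclideanSpace ℝ (Fin (2 * l)))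
    (hx : ∀ i, ⟪Q i x, x⟫ = 0) :
    ∀ i j k, ⟪Q i (Q j (Q k x)), x⟫ = 0 := by
  have hsq : ∀ i v, Q i (Q i v) = v := by
    intro i v
    have h := congrFun (congrArg DFunLike.coe (hcliff i i)) v
    rw [if_pos rfl] at h
    simp only [LinearMap.add_apply, Module.End.mul_apply,
      LinearMap.smul_apply, Module.End.one_apply] at h
    have h2 : (2:ℝ) • Q i (Q i v) = (2:ℝ) • v := by
      rw [two_smul]; exact h
    exact smul_right_injective _ (by norm_num : (2:ℝ) ≠ 0) h2
  have hanti : ∀ i j, i ≠ j → ∀ v, Q i (Q j v) = - Q j (Q i v) := by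
    intro i j hij v
    have h := congrFun (congrArg DFunLike.coe (hcliff i j)) v
    simp only [if_neg hij, LinearMap.add_apply, Module.End.mul_apply,
      LinearMap.zero_apply] at h
    exact eq_neg_of_add_eq_zero_left h
  intro i j k
  by_cases hij : i = j
  · subst hij; rw [hsq]; exact hx k
  by_cases hjk : j = k
  · subst hjk; rw [hsq]; exact hx i
  by_cases hik : i = k
  · subst hik
    rw [hanti j i (Ne.symm hij) x, map_neg, hsq, inner_neg_left, hx, neg_zero]
  · -- all distinct
    have ha : ⟪Q i (Q j (Q k x)), x⟫ = ⟪x, Q k (Q j (Q i x))⟫ := by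
      rw [hsymm i, hsymm j, hsymm k, real_inner_comm]
    have hb : Q k (Q j (Q i x)) = - Q i (Q j (Q k x)) := by
      rw [hanti k j (Ne.symm hjk), hanti k i (Ne.symm hik), map_neg, neg_neg,
        hanti j i (Ne.symm hij)]
    have := ha
    rw [hb, inner_neg_right] at this
    rw [real_inner_comm] at this ⊢
    linarith
end

section
/- Let Q_0, Q_1, …, Q_m be a Clifford system on ℝ^{2l}, and let x ∈ ℝ^{2l} satisfy ⟪Q_i x, x⟫ = 0 for all i = 0, …, m. For a, b, c ∈ {1, …, m} define L(a, b, c) = ⟪Q_a (Q_b (Q_c (Q_0 x))), x⟫. Then L is alternating in its three indices: L(a, b, c) = −L(b, a, c) = −L(a, c, b) for all a, b, c ∈ {1, …, m} (in particular L vanishes whenever two of the indices coincide). -/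
open scoped RealInnerProductSpace

/-- **Lemma 7.A, part (2).**
Let `Q 0, Q 1, …, Q m` be a Clifford system on `ℝ^(2l)` and let `x` satisfy
`⟪Q i x, x⟫ = 0` for all `i`.  For `a, b, c ∈ {1, …, m}` (encoded as `Fin m`
via `Fin.succ`), the quantity `L a b c = ⟪Q a (Q b (Q c (Q 0 x))), x⟫` is
alternating in its three indices: `L a b c = −L b a c = −L a c b`. -/
theorem stmt2 (l m : ℕ)
    (Q : Fin (m + 1) → Module.End ℝ (EuclideanSpace ℝ (Fin (2 * l))))
    (hsymm : ∀ i, ∀ v w : EuclideanSpace ℝ (Fin (2 * l)), ⟪Q i v, w⟫ = ⟪v, Q i w⟫)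
    (hcliff : ∀ i j, Q i * Q j + Q j * Q i =
      if i = j then (2 : ℝ) • (1 : Module.End ℝ (EuclideanSpace ℝ (Fin (2 * l)))) else 0)
    (x : EuclideanSpace ℝ (Fin (2 * l)))
    (hx : ∀ i, ⟪Q i x, x⟫ = 0)
    (L : Fin m → Fin m → Fin m → ℝ)
    (hL : ∀ a b c, L a b c = ⟪Q a.succ (Q b.succ (Q c.succ (Q 0 x))), x⟫) :
    ∀ a b c, L a b c = -(L b a c) ∧ L a b c = -(L a c b) := by
  have hanti : ∀ i j, i ≠ j → ∀ v, Q i (Q j v) = -(Q j (Q i v)) := by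
    intro i j hij v
    have h := hcliff i j
    rw [if_neg hij] at h
    have h2 := congrArg (fun T : Module.End ℝ (EuclideanSpace ℝ (Fin (2 * l))) => T v) h
    simp only [Module.End.one_apply,
      LinearMap.add_apply, Module.End.mul_apply, LinearMap.zero_apply] at h2
    exact eq_neg_of_add_eq_zero_left h2
  have hsq : ∀ i v, Q i (Q i v) = v := by
    intro i v
    have h := hcliff i i
    rw [if_pos rfl] at h
    have h2 := congrArg (fun T : Module.End ℝ (EuclideanSpace ℝ (Fin (2 * l))) => T v) h
    simp only [LinearMap.add_apply, Module.End.mul_apply, LinearMap.smul_apply,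
      Module.End.one_apply] at h2
    have : (2:ℝ) • Q i (Q i v) = (2:ℝ) • v := by
      rw [two_smul]; exact h2
    exact smul_right_injective _ (by norm_num) this
  have hzero : ∀ i j, i ≠ j → ⟪Q i (Q j x), x⟫ = 0 := by
    intro i j hij
    have h1 : ⟪Q i (Q j x), x⟫ = ⟪Q j (Q i x), x⟫ := by
      rw [hsymm i, real_inner_comm, hsymm j, real_inner_comm]
    have h2 : ⟪Q i (Q j x), x⟫ = -⟪Q j (Q i x), x⟫ := by
      rw [hanti i j hij x, inner_neg_left]
    linarith [h1, h2]
  intro a b c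
  constructor
  · by_cases hab : a = b
    · subst hab
      have : L a a c = 0 := by
        rw [hL, hsq, hzero c.succ 0 (Fin.succ_ne_zero c)]
      rw [this]; ring
    · rw [hL, hL, hanti a.succ b.succ (fun h => hab (Fin.succ_injective _ h)),
        inner_neg_left]
  · by_cases hbc : b = c
    · subst hbc
      have : L a b b = 0 := by
        rw [hL, hsq, hzero a.succ 0 (Fin.succ_ne_zero a)]
      rw [this]; ring
    · rw [hL, hL, hanti b.succ c.succ (fun h => hbc (Fin.succ_injective _ h)),
        map_neg, inner_neg_left]
end

section
/- Let Q_0, Q_1, …, Q_m be a Clifford system on ℝ^{2l}, and let x ∈ ℝ^{2l} satisfy ⟪Q_i x, x⟫ = 0 for all i = 0, …, m. Then: (i) ⟪Q_i (Q_j x), Q_k x⟫ = 0 for all i, j, k ∈ {0, …, m}; (ii) ⟪Q_i (Q_a (Q_0 x)), Q_b (Q_0 x)⟫ = 0 for all i ∈ {0, …, m} and all a, b ∈ {1, …, m}; (iii) if u, v ∈ ℝ^{2l} satisfy Q_0 u = ε u and Q_0 v = ε v for the same sign ε ∈ {+1, −1}, then ⟪Q_a u, v⟫ = 0 for every a ∈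 {1, …, m}. -/
open scoped RealInnerProductSpace

/-- **Lemma 7.B.**
Let `Q 0, Q 1, …, Q m` be a Clifford system on `ℝ^(2l)` and let `x` satisfy
`⟪Q i x, x⟫ = 0` for all `i`.  Then:
(i) `⟪Q i (Q j x), Q k x⟫ = 0` for all `i, j, k ∈ {0, …, m}`;
(ii) `⟪Q i (Q a (Q 0 x)), Q b (Q 0 x)⟫ = 0` for all `i ∈ {0, …, m}` and
`a, b ∈ {1, …, m}`;
(iii) if `Q 0 u = ε • u` and `Q 0 v = ε • v` for the same sign `ε = ±1`, then
`⟪Q a u, v⟫ = 0` for every `a ∈ {1, …, m}`. -/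
theorem stmt3 (l m : ℕ)
    (Q : Fin (m + 1) → Module.End ℝ (EuclideanSpace ℝ (Fin (2 * l))))
    (hsymm : ∀ i, ∀ v w : EuclideanSpace ℝ (Fin (2 * l)), ⟪Q i v, w⟫ = ⟪v, Q i w⟫)
    (hcliff : ∀ i j, Q i * Q j + Q j * Q i =
      if i = j then (2 : ℝ) • (1 : Module.End ℝ (EuclideanSpace ℝ (Fin (2 * l)))) else 0)
    (x : EuclideanSpace ℝ (Fin (2 * l)))
    (hx : ∀ i, ⟪Q i x, x⟫ = 0) :
    (∀ i j k, ⟪Q i (Q j x), Q k x⟫ = 0) ∧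
    (∀ i, ∀ a b : Fin m, ⟪Q i (Q a.succ (Q 0 x)), Q b.succ (Q 0 x)⟫ = 0) ∧
    (∀ ε : ℝ, (ε = 1 ∨ ε = -1) →
      ∀ u v : EuclideanSpace ℝ (Fin (2 * l)),
        Q 0 u = ε • u → Q 0 v = ε • v → ∀ a : Fin m, ⟪Q a.succ u, v⟫ = 0) := by
  have hmul : ∀ i j, i ≠ j → ∀ w, Q i (Q j w) = -(Q j (Q i w)) := by
    intro i j hij w
    have h := hcliff i j
    rw [if_neg hij] at h
    have h2 := congrArg (fun T : Module.End ℝ (EuclideanSpace ℝ (Fin (2 * l))) => T w) h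
    simp only [LinearMap.add_apply, Module.End.mul_apply, LinearMap.zero_apply] at h2
    exact eq_neg_of_add_eq_zero_left h2
  have hsq : ∀ i w, Q i (Q i w) = w := by
    intro i w
    have h := congrArg (fun T : Module.End ℝ (EuclideanSpace ℝ (Fin (2 * l))) => T w) (hcliff i i)
    simp only [if_pos rfl, LinearMap.add_apply, Module.End.mul_apply, LinearMap.smul_apply,
      Module.End.one_apply] at h
    rw [two_smul] at h
    have h2 : (2 : ℝ) • Q i (Q i w) = (2 : ℝ) • w := by rw [two_smul, two_smul]; exact h
    exact smul_right_injective _ (two_ne_zero) h2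
  have part1 : ∀ i j k, ⟪Q i (Q j x), Q k x⟫ = 0 := by
    intro i j k
    by_cases hij : i = j
    · subst hij
      rw [hsq i x, real_inner_comm]
      exact hx k
    by_cases hik : i = k
    · subst hik
      calc ⟪Q i (Q j x), Q i x⟫ = ⟪Q j x, Q i (Q i x)⟫ := hsymm i _ _
        _ = ⟪Q j x, x⟫ := by rw [hsq]
        _ = 0 := hx j
    by_cases hjk : j = k
    · subst hjk
      have key : ⟪Q i (Q j x), Q j x⟫ = -⟪Q i x, x⟫ := by
        calc ⟪Q i (Q j x), Q j x⟫ = ⟪Q j x, Q i (Q j x)⟫ := real_inner_comm _ _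
          _ = ⟪x, Q j (Q i (Q j x))⟫ := hsymm j _ _
          _ = ⟪x, -(Q i (Q j (Q j x)))⟫ := by rw [hmul j i (Ne.symm hij)]
          _ = -⟪x, Q i x⟫ := by rw [hsq, inner_neg_right]
          _ = -⟪Q i x, x⟫ := by rw [real_inner_comm]
      rw [key, hx i, neg_zero]
    · have key : ⟪Q i (Q j x), Q k x⟫ = -⟪Q i (Q j x), Q k x⟫ := by
        calc ⟪Q i (Q j x), Q k x⟫ = ⟪Q j x, Q i (Q k x)⟫ := hsymm i _ _
          _ = ⟪x, Q j (Q i (Q k x))⟫ := hsymm j _ _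
          _ = ⟪x, -(Q i (Q j (Q k x)))⟫ := by rw [hmul j i (Ne.symm hij)]
          _ = ⟪x, Q i (Q k (Q j x))⟫ := by rw [hmul j k hjk]; simp
          _ = ⟪x, -(Q k (Q i (Q j x)))⟫ := by rw [hmul i k hik]
          _ = -⟪x, Q k (Q i (Q j x))⟫ := by rw [inner_neg_right]
          _ = -⟪Q k x, Q i (Q j x)⟫ := by rw [hsymm k]
          _ = -⟪Q i (Q j x), Q k x⟫ := by rw [real_inner_comm]
      linarith
  refine ⟨part1, ?_, ?_⟩
  · intro i a b
    by_cases hi : i = 0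
    · subst hi
      have e1 : Q 0 (Q a.succ (Q 0 x)) = -(Q a.succ x) := by
        rw [hmul 0 a.succ (Ne.symm (Fin.succ_ne_zero a)), hsq]
      rw [e1, inner_neg_left]
      have : ⟪Q a.succ x, Q b.succ (Q 0 x)⟫ = ⟪Q b.succ (Q a.succ x), Q 0 x⟫ :=
        (hsymm b.succ _ _).symm
      rw [this, part1 b.succ a.succ 0, neg_zero]
    · have e1 : Q a.succ (Q 0 x) = -(Q 0 (Q a.succ x)) := hmul a.succ 0 (Fin.succ_ne_zero a) x
      have e2 : Q i (Q 0 (Q a.succ x)) = -(Q 0 (Q i (Q a.succ x))) := hmul i 0 hi _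
      calc ⟪Q i (Q a.succ (Q 0 x)), Q b.succ (Q 0 x)⟫
          = ⟪Q 0 (Q i (Q a.succ x)), Q b.succ (Q 0 x)⟫ := by rw [e1]; rw [map_neg, e2]; simp
        _ = ⟪Q i (Q a.succ x), Q 0 (Q b.succ (Q 0 x))⟫ := hsymm 0 _ _
        _ = ⟪Q i (Q a.succ x), -(Q b.succ x)⟫ := by
            rw [hmul 0 b.succ (Ne.symm (Fin.succ_ne_zero b)), hsq]
        _ = -⟪Q i (Q a.succ x), Q b.succ x⟫ := by rw [inner_neg_right]
        _ = 0 := by rw [part1 i a.succ b.succ, neg_zero]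
  · intro ε hε u v hu hv a
    have hε2 : ε * ε = 1 := by rcases hε with h | h <;> rw [h] <;> norm_num
    have hvv : v = ε • Q 0 v := by rw [hv, smul_smul, hε2, one_smul]
    have key : ⟪Q a.succ u, v⟫ = -⟪Q a.succ u, v⟫ := by
      calc ⟪Q a.succ u, v⟫ = ⟪Q a.succ u, ε • Q 0 v⟫ := by rw [← hvv]
        _ = ε * ⟪Q a.succ u, Q 0 v⟫ := real_inner_smul_right _ _ _
        _ = ε * ⟪Q 0 (Q a.succ u), v⟫ := by rw [hsymm 0]
        _ = ε * ⟪-(Q a.succ (Q 0 u)), v⟫ := by rw [hmul 0 a.succ (Ne.symm (Fin.succ_ne_zero a))]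
        _ = ε * -⟪Q a.succ (ε • u), v⟫ := by rw [inner_neg_left, hu]
        _ = ε * -(ε * ⟪Q a.succ u, v⟫) := by rw [map_smul, real_inner_smul_left]
        _ = -((ε * ε) * ⟪Q a.succ u, v⟫) := by ring
        _ = -⟪Q a.succ u, v⟫ := by rw [hε2, one_mul]
    linarith
end

section
/- Let m, N ≥ 1 and set D = 2m + 2N + 2. Suppose given real arrays Fα(α, b, a) and Fμ(μ, b, a) (α resp. μ ∈ {1,…,N}, a, b ∈ {1,…,m}), G(μ, α, a) (μ, α ∈ {1,…,N}, a ∈ {1,…,m}) and L(a, b, c) (a, b, c ∈ {1,…,m}) satisfying: (H1) L is alternating in its three indices; (H2) Fα(α, a, b) = −Fα(α, b, a) and Fμ(μ, a, b) = −Fμ(μ, b, a) for all indices; (H3) ∑_α [Fα(α,c,a)Fα(α,d,b) + Fα(α,c,b)Fα(α,d,a)] = ∑_μ [Fμ(μ,c,a)Fμ(μ,d,b) + Fμ(μ,c,b)Fμ(μ,d,a)] for all a,b,c,d; (H4) ∑_c [Fα(α,c,a)Fα(β,c,b) + Fα(α,c,b)Fα(β,c,a)] + 2∑_μ [G(μ,α,a)G(μ,β,b)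 + G(μ,α,b)G(μ,β,a)] = δ_{αβ} δ_{ab} for all α,β,a,b; (H5) ∑_c [Fμ(μ,c,a)Fμ(ν,c,b) + Fμ(μ,c,b)Fμ(ν,c,a)] + 2∑_α [G(μ,α,a)G(ν,α,b) + G(μ,α,b)G(ν,α,a)] = δ_{μν} δ_{ab} for all μ,ν,a,b; (H6) ∑_c [Fα(α,c,a)L(c,b,d) + Fα(α,c,b)L(c,a,d)] = 2∑_μ [G(μ,α,a)Fμ(μ,d,b) + G(μ,α,b)Fμ(μ,d,a)] for all α,a,b,d; (H7) ∑_c [Fμ(μ,c,a)L(c,b,d) + Fμ(μ,c,b)L(c,a,d)] = 2∑_α [Fα(α,b,d)G(μ,α,a) + Fα(α,a,d)G(μ,α,b)] for all μ,a,b,d; (H8) 2δ_{ac}δ_{bd} − δ_{ad}δ_{bc} − δ_{ab}δ_{dc} = ∑_e [L(a,b,e)L(c,d,e) + L(a,d,e)L(c,b,e)] + 2∑_α [Fα(α,b,c)Fα(α,d,a) + Fα(α,b,a)Fα(α,d,c)] for all a,b,c,d. Fix an orthonormal basis of ℝ^D labelled x, e₀, e_a, e_{a+m} (a ∈ {1,…,m}),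 e_α (α ∈ {1,…,N}), e_μ (μ ∈ {1,…,N}), and define linear operators Q_0, Q_1, …, Q_m on ℝ^D by: Q_0 x = e₀, Q_0 e₀ = x, Q_0 e_a = −e_{a+m}, Q_0 e_{a+m} = −e_a, Q_0 e_α = −e_α, Q_0 e_μ = e_μ; and for each a: Q_a x = e_a, Q_a e₀ = e_{a+m}, Q_a e_b = δ_{ab} x − ∑_c L(c,a,b) e_{c+m} + ∑_α Fα(α,a,b) e_α + ∑_μ Fμ(μ,a,b) e_μ, Q_a e_{b+m} = δ_{ab} e₀ + ∑_c L(c,a,b) e_c + ∑_α Fα(α,b,a) e_α − ∑_μ Fμ(μ,b,a) e_μ, Q_a e_α = ∑_b Fα(α,a,b) e_b + ∑_b Fα(α,b,a) e_{b+m} − 2∑_μ G(μ,α,a) e_μ, Q_a e_μ = ∑_b Fμ(μ,a,b) e_b − ∑_b Fμ(μ,b,a) e_{b+m} − 2∑_α G(μ,α,a) e_α. Then each Q_i is symmetric (⟪Q_i v, w⟫ = ⟪v, Q_i w⟫ for all v, w) and Q_i ∘ Q_j + Q_j ∘ Q_i = 2 δ_{ij} · id for all i, j ∈ {0, 1, …,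 m}; that is, Q_0, Q_1, …, Q_m form a Clifford system on ℝ^D. -/
open scoped RealInnerProductSpace

/-- Index type labelling the orthonormal basis `x, e₀, e_a, e_{a+m}, e_α, e_μ`
of `ℝ^D`, `D = 2m + 2N + 2`. -/
inductive FKMIdx (m N : ℕ) : Type
  | x : FKMIdx m N
  | e0 : FKMIdx m N
  | ea : Fin m → FKMIdx m N      -- e_a, a = 1,…,m
  | eam : Fin m → FKMIdx m N     -- e_{a+m}, a = 1,…,m
  | eal : Fin N → FKMIdx m N     -- e_α, α = 1,…,N
  | emu : Fin N → FKMIdx m N     -- e_μ, μ = 1,…,N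
  deriving DecidableEq, Fintype


namespace FKMAux

variable {m N : ℕ}

/-- Explicit equiv with a sum type, for decomposing sums over `FKMIdx`. -/
def idxEquiv (m N : ℕ) : (Unit ⊕ Unit ⊕ Fin m ⊕ Fin m ⊕ Fin N ⊕ Fin N) ≃ FKMIdx m N where
  toFun i := match i with
    | .inl _ => .x
    | .inr (.inl _) => .e0
    | .inr (.inr (.inl a)) => .ea a
    | .inr (.inr (.inr (.inl a))) => .eam a
    | .inr (.inr (.inr (.inr (.inl α)))) => .eal α
    | .inr (.inr (.inr (.inr (.inr μ)))) => .emu μ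
  invFun i := match i with
    | .x => .inl ()
    | .e0 => .inr (.inl ())
    | .ea a => .inr (.inr (.inl a))
    | .eam a => .inr (.inr (.inr (.inl a)))
    | .eal α => .inr (.inr (.inr (.inr (.inl α))))
    | .emu μ => .inr (.inr (.inr (.inr (.inr μ))))
  left_inv := by rintro (⟨⟩|⟨⟩|a|a|α|μ) <;> rfl
  right_inv := by rintro (_|_|a|a|α|μ) <;> rfl

lemma sum_idx {M : Type*} [AddCommMonoid M] (f : FKMIdx m N → M) :
    ∑ i, f i = f .x + f .e0 + (∑ a, f (.ea a)) + (∑ a, f (.eam a)) +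
      (∑ α, f (.eal α)) + (∑ μ, f (.emu μ)) := by
  rw [← (idxEquiv m N).sum_comp f]
  simp [Fintype.sum_sum_type, idxEquiv, add_assoc]

/-- Matrix of `Q 0` in the basis. -/
def C0 (m N : ℕ) : FKMIdx m N → FKMIdx m N → ℝ
  | .x, .e0 => 1
  | .e0, .x => 1
  | .ea a, .eam a' => if a = a' then -1 else 0
  | .eam a, .ea a' => if a = a' then -1 else 0
  | .eal α, .eal α' => if α = α' then -1 else 0
  | .emu μ, .emu μ' => if μ = μ' then 1 else 0
  | _, _ => 0

/-- Matrix of `Q a.succ` in the basis. -/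
def CS (Fα Fμ : Fin N → Fin m → Fin m → ℝ) (G : Fin N → Fin N → Fin m → ℝ)
    (L : Fin m → Fin m → Fin m → ℝ) (a : Fin m) : FKMIdx m N → FKMIdx m N → ℝ
  | .x, .ea b' => if a = b' then 1 else 0
  | .e0, .eam b' => if a = b' then 1 else 0
  | .ea b', .x => if a = b' then 1 else 0
  | .ea b', .eam c => -(L c a b')
  | .ea b', .eal α => Fα α a b'
  | .ea b', .emu μ => Fμ μ a b'
  | .eam b', .e0 => if a = b' then 1 else 0
  | .eam b', .ea c => L c a b'
  | .eam b', .eal α => Fα α b' a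
  | .eam b', .emu μ => -(Fμ μ b' a)
  | .eal α, .ea b' => Fα α a b'
  | .eal α, .eam b' => Fα α b' a
  | .eal α, .emu μ => -2 * G μ α a
  | .emu μ, .ea b' => Fμ μ a b'
  | .emu μ, .eam b' => -(Fμ μ b' a)
  | .emu μ, .eal α => -2 * G μ α a
  | _, _ => 0

end FKMAux

open FKMAux

namespace FKMAux

lemma sum_congr' {ι : Type*} [Fintype ι] {f g : ι → ℝ} (h : ∀ x, f x = g x) :
    (∑ x, f x) = ∑ x, g x :=
  Finset.sum_congr rfl fun x _ => h x

lemma sneg {ι : Type*} [Fintype ι] {f g : ι → ℝ} (h : ∀ x, f x = -(g x)) :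
    (∑ x, f x) = -∑ x, g x := by
  rw [← Finset.sum_neg_distrib]
  exact Finset.sum_congr rfl fun x _ => h x

lemma sum_smul_congr {ι : Type*} [Fintype ι] (c : ℝ) {f g : ι → ℝ} (h : ∀ x, f x = c * g x) :
    (∑ x, f x) = c * ∑ x, g x := by
  rw [Finset.mul_sum]
  exact Finset.sum_congr rfl fun x _ => h x

lemma ite_flip {α : Type*} [DecidableEq α] (x y : α) (r : ℝ) :
    (if x = y then r else 0) = if y = x then r else 0 := by
  rcases eq_or_ne x y with h | h
  · subst h; rfl
  · rw [if_neg h, if_neg (Ne.symm h)]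

end FKMAux

set_option maxHeartbeats 1000000 in
/-- **Detail (I) of the proof of Theorem 9.1.**
Given frame coefficients `Fα, Fμ, G, L` satisfying the algebraic identities
(H1)–(H8), the operators `Q 0, Q 1, …, Q m` defined by the displayed action on
an orthonormal basis of `ℝ^D`, `D = 2m + 2N + 2`, form a Clifford system:
each `Q i` is symmetric and `Q i * Q j + Q j * Q i = 2 δᵢⱼ • id`. -/
theorem stmt5 (m N : ℕ) (hm : 1 ≤ m) (hN : 1 ≤ N)
    (Fα Fμ : Fin N → Fin m → Fin m → ℝ)
    (G : Fin N → Fin N → Fin m → ℝ)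
    (L : Fin m → Fin m → Fin m → ℝ)
    (H1 : ∀ a b c, L a b c = -(L b a c) ∧ L a b c = -(L a c b))
    (H2 : (∀ α a b, Fα α a b = -(Fα α b a)) ∧ (∀ μ a b, Fμ μ a b = -(Fμ μ b a)))
    (H3 : ∀ a b c d,
      (∑ α, (Fα α c a * Fα α d b + Fα α c b * Fα α d a)) =
      (∑ μ, (Fμ μ c a * Fμ μ d b + Fμ μ c b * Fμ μ d a)))
    (H4 : ∀ α β a b,
      (∑ c, (Fα α c a * Fα β c b + Fα α c b * Fα β c a)) +
        2 * (∑ μ, (G μ α a * G μ β b + G μ α b * G μ β a)) =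
      (if α = β then (1 : ℝ) else 0) * (if a = b then (1 : ℝ) else 0))
    (H5 : ∀ μ ν a b,
      (∑ c, (Fμ μ c a * Fμ ν c b + Fμ μ c b * Fμ ν c a)) +
        2 * (∑ α, (G μ α a * G ν α b + G μ α b * G ν α a)) =
      (if μ = ν then (1 : ℝ) else 0) * (if a = b then (1 : ℝ) else 0))
    (H6 : ∀ α a b d,
      (∑ c, (Fα α c a * L c b d + Fα α c b * L c a d)) =
      2 * (∑ μ, (G μ α a * Fμ μ d b + G μ α b * Fμ μ d a)))
    (H7 : ∀ μ a b d,
      (∑ c, (Fμ μ c a * L c b d + Fμ μ c b * L c a d)) =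
      2 * (∑ α, (Fα α b d * G μ α a + Fα α a d * G μ α b)))
    (H8 : ∀ a b c d,
      2 * (if a = c then (1 : ℝ) else 0) * (if b = d then (1 : ℝ) else 0) -
        (if a = d then (1 : ℝ) else 0) * (if b = c then (1 : ℝ) else 0) -
        (if a = b then (1 : ℝ) else 0) * (if d = c then (1 : ℝ) else 0) =
      (∑ e, (L a b e * L c d e + L a d e * L c b e)) +
        2 * (∑ α, (Fα α b c * Fα α d a + Fα α b a * Fα α d c)))
    (b : OrthonormalBasis (FKMIdx m N) ℝ (EuclideanSpace ℝ (Fin (2 * m + 2 * N + 2))))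
    (Q : Fin (m + 1) → Module.End ℝ (EuclideanSpace ℝ (Fin (2 * m + 2 * N + 2))))
    (hQ0x : Q 0 (b .x) = b .e0)
    (hQ0e0 : Q 0 (b .e0) = b .x)
    (hQ0ea : ∀ a, Q 0 (b (.ea a)) = -(b (.eam a)))
    (hQ0eam : ∀ a, Q 0 (b (.eam a)) = -(b (.ea a)))
    (hQ0eal : ∀ α, Q 0 (b (.eal α)) = -(b (.eal α)))
    (hQ0emu : ∀ μ, Q 0 (b (.emu μ)) = b (.emu μ))
    (hQax : ∀ a : Fin m, Q a.succ (b .x) = b (.ea a))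
    (hQae0 : ∀ a : Fin m, Q a.succ (b .e0) = b (.eam a))
    (hQaeb : ∀ a b' : Fin m, Q a.succ (b (.ea b')) =
      (if a = b' then (1 : ℝ) else 0) • b .x - (∑ c, L c a b' • b (.eam c)) +
        (∑ α, Fα α a b' • b (.eal α)) + (∑ μ, Fμ μ a b' • b (.emu μ)))
    (hQaebm : ∀ a b' : Fin m, Q a.succ (b (.eam b')) =
      (if a = b' then (1 : ℝ) else 0) • b .e0 + (∑ c, L c a b' • b (.ea c)) +
        (∑ α, Fα α b' a • b (.eal α)) - (∑ μ, Fμ μ b' a • b (.emu μ)))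
    (hQaeal : ∀ (a : Fin m) (α : Fin N), Q a.succ (b (.eal α)) =
      (∑ b', Fα α a b' • b (.ea b')) + (∑ b', Fα α b' a • b (.eam b')) -
        (2 : ℝ) • (∑ μ, G μ α a • b (.emu μ)))
    (hQaemu : ∀ (a : Fin m) (μ : Fin N), Q a.succ (b (.emu μ)) =
      (∑ b', Fμ μ a b' • b (.ea b')) - (∑ b', Fμ μ b' a • b (.eam b')) -
        (2 : ℝ) • (∑ α, G μ α a • b (.eal α))) :
    (∀ i, ∀ v w : EuclideanSpace ℝ (Fin (2 * m + 2 * N + 2)), ⟪Q i v, w⟫ = ⟪v, Q i w⟫) ∧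
    (∀ i j, Q i * Q j + Q j * Q i =
      if i = j then (2 : ℝ) • (1 : Module.End ℝ (EuclideanSpace ℝ (Fin (2 * m + 2 * N + 2)))) else 0) := by
  classical
  obtain ⟨hFa, hFm⟩ := H2
  have hL12 : ∀ x y z, L x y z = -(L y x z) := fun x y z => (H1 x y z).1
  have hL23 : ∀ x y z, L x y z = -(L x z y) := fun x y z => (H1 x y z).2
  have hL13 : ∀ x y z, L x y z = -(L z y x) := by
    intro x y z; rw [hL12, hL23 y x z, hL12 y z x]; ring
  have hLcyc : ∀ x y z, L x y z = L y z x := by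
    intro x y z; rw [hL12, hL23 y x z]; ring
  set C : Fin (m + 1) → FKMIdx m N → FKMIdx m N → ℝ :=
    fun i => Fin.cases (C0 m N) (fun a => CS Fα Fμ G L a) i with hCdef
  have hC0 : ∀ j k, C 0 j k = C0 m N j k := fun _ _ => rfl
  have hCSucc : ∀ (a : Fin m) j k, C a.succ j k = CS Fα Fμ G L a j k := by
    intro a j k; simp [hCdef]
  -- `Q i (b j)` expands with matrix `C`
  have hC : ∀ i j, Q i (b j) = ∑ k, C i j k • b k := by
    intro i
    induction i using Fin.cases with
    | zero =>
      intro j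
      simp only [hC0]
      cases j <;>
        simp [sum_idx, C0, hQ0x, hQ0e0, hQ0ea, hQ0eam, hQ0eal, hQ0emu, ite_smul,
          Finset.sum_ite_eq]
    | succ a =>
      intro j
      simp only [hCSucc]
      cases j <;>
        simp [sum_idx, CS, hQax, hQae0, hQaeb, hQaebm, hQaeal, hQaemu, ite_smul,
          Finset.sum_ite_eq, neg_smul, Finset.sum_neg_distrib, sub_eq_add_neg,
          Finset.smul_sum, smul_smul] <;>
        (try abel)
  -- the matrix `C i` is symmetric
  have hCsymm : ∀ i j k, C i j k = C i k j := by
    intro i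
    induction i using Fin.cases with
    | zero =>
      intro j k
      simp only [hC0]
      cases j <;> cases k <;> simp [C0, eq_comm]
    | succ a =>
      intro j k
      simp only [hCSucc]
      cases j <;> cases k <;> simp [CS, eq_comm] <;> (try rw [hL13]) <;> (try ring)
  -- the Clifford relation at the level of matrices
  have key0S : ∀ (B : Fin m) (p k : FKMIdx m N),
      (∑ l, (CS Fα Fμ G L B p l * C0 m N l k + C0 m N p l * CS Fα Fμ G L B l k)) = 0 := by
    intro B p k
    cases p <;> cases k <;>
      simp only [sum_idx, C0, CS, mul_ite, ite_mul, mul_one, mul_zero, mul_neg, neg_mul,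
        zero_mul, one_mul, neg_zero, neg_neg, zero_add, add_zero,
        Finset.sum_add_distrib, Finset.sum_neg_distrib, Finset.sum_ite_eq, Finset.sum_ite_eq',
        Finset.mem_univ, if_true, Finset.sum_const_zero, ite_self]
    all_goals
      first
        | (simp [eq_comm]; done)
        | (simp [eq_comm]; split <;> norm_num)
        | (rw [hFa]; ring)
        | (rw [hFm]; ring)
        | ring
  have keySS : ∀ (A B : Fin m) (p k : FKMIdx m N),
      (∑ l, (CS Fα Fμ G L B p l * CS Fα Fμ G L A l k +
        CS Fα Fμ G L A p l * CS Fα Fμ G L B l k)) =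
      (if A = B then (2:ℝ) else 0) * (if p = k then 1 else 0) := by
    intro A B p k
    cases p <;> cases k <;>
      simp only [sum_idx, C0, CS, mul_ite, ite_mul, mul_one, mul_zero, mul_neg, neg_mul,
        zero_mul, one_mul, neg_zero, neg_neg, zero_add, add_zero,
        Finset.sum_add_distrib, Finset.sum_neg_distrib, Finset.sum_ite_eq, Finset.sum_ite_eq',
        Finset.mem_univ, if_true, Finset.sum_const_zero, ite_self]
    case x.x => rw [ite_flip B A (1:ℝ)]; split <;> norm_num
    case x.e0 => simp
    case x.ea y => simp
    case x.eam y => rw [hL23 y A B]; simp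
    case x.eal β => rw [hFa β A B]; simp
    case x.emu ν => rw [hFm ν A B]; simp
    case e0.x => simp
    case e0.e0 => rw [ite_flip B A (1:ℝ)]; split <;> norm_num
    case e0.ea y => rw [hL23 y A B]; simp
    case e0.eam y => simp
    case e0.eal β => rw [hFa β B A]; simp
    case e0.emu ν => rw [hFm ν B A]; simp
    case ea.x z => simp
    case ea.e0 z => rw [hL12 A B z]; simp
    case eam.x z => rw [hL12 A B z]; simp
    case eam.e0 z => simp
    case eal.x β => rw [hFa β B A]; simp
    case eal.e0 β => rw [hFa β A B]; simp
    case emu.x ν => rw [hFm ν B A]; simp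
    case emu.e0 ν => rw [hFm ν A B]; simp
    case ea.ea z y =>
      have h81 := H8 B z y A
      have h82 := H8 A z y B
      have h3 := H3 z y B A
      simp only [Finset.sum_add_distrib] at h81 h82 h3
      rw [ite_flip z A (1:ℝ), ite_flip B A (1:ℝ)] at h81
      rw [ite_flip z B (1:ℝ)] at h82
      have b1 : (∑ x, L x B z * L y A x) = ∑ x, L B z x * L y A x :=
        sum_congr' fun x => by rw [hLcyc x B z]
      have b2 : (∑ x, L x A z * L y B x) = ∑ x, L A z x * L y B x :=
        sum_congr' fun x => by rw [hLcyc x A z]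
      have bb : (∑ x, L A B x * L y z x) = -∑ x, L B A x * L y z x :=
        sneg fun x => by rw [hL12 A B x]; ring
      have bc : (∑ x, Fα x z y * Fα x B A) = -∑ x, Fα x z y * Fα x A B :=
        sneg fun x => by rw [hFa x B A]; ring
      have b4 : (∑ x, Fα x B z * Fα x A y) = -∑ x, Fα x z B * Fα x A y :=
        sneg fun x => by rw [hFa x B z]; ring
      have b5 : (∑ x, Fα x A z * Fα x B y) = -∑ x, Fα x z A * Fα x B y :=
        sneg fun x => by rw [hFa x A z]; ring
      have b7 : (∑ x, Fα x B y * Fα x A z) = ∑ x, Fα x A z * Fα x B y :=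
        sum_congr' fun x => mul_comm _ _
      have b8 : (∑ x, Fμ x B y * Fμ x A z) = ∑ x, Fμ x A z * Fμ x B y :=
        sum_congr' fun x => mul_comm _ _
      have d1 : (if A = y then (if B = z then (1:ℝ) else 0) else 0)
          = (if A = y then (1:ℝ) else 0) * (if B = z then (1:ℝ) else 0) := by
        split_ifs <;> norm_num
      have d2 : (if B = y then (if A = z then (1:ℝ) else 0) else 0)
          = (if B = y then (1:ℝ) else 0) * (if A = z then (1:ℝ) else 0) := by
        split_ifs <;> norm_num
      simp only [FKMIdx.ea.injEq]
      have d3 : (if z = y then (if A = B then (2:ℝ) else 0) else 0)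
          = 2 * ((if A = B then (1:ℝ) else 0) * (if z = y then (1:ℝ) else 0)) := by
        split_ifs <;> norm_num
      linarith [h81, h82, h3, b1, b2, bb, bc, b4, b5, b7, b8, d1, d2, d3]
    case eam.eam z y =>
      have h81 := H8 B z y A
      have h82 := H8 A z y B
      have h3 := H3 B A z y
      simp only [Finset.sum_add_distrib] at h81 h82 h3
      rw [ite_flip z A (1:ℝ), ite_flip B A (1:ℝ)] at h81
      rw [ite_flip z B (1:ℝ)] at h82
      have b1 : (∑ x, L x B z * L y A x) = ∑ x, L B z x * L y A x :=
        sum_congr' fun x => by rw [hLcyc x B z]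
      have b2 : (∑ x, L x A z * L y B x) = ∑ x, L A z x * L y B x :=
        sum_congr' fun x => by rw [hLcyc x A z]
      have bb : (∑ x, L A B x * L y z x) = -∑ x, L B A x * L y z x :=
        sneg fun x => by rw [hL12 A B x]; ring
      have bc : (∑ x, Fα x z y * Fα x B A) = -∑ x, Fα x z y * Fα x A B :=
        sneg fun x => by rw [hFa x B A]; ring
      have b4 : (∑ x, Fα x z B * Fα x y A) = -∑ x, Fα x z B * Fα x A y :=
        sneg fun x => by rw [hFa x y A]; ring
      have b5 : (∑ x, Fα x z A * Fα x y B) = -∑ x, Fα x z A * Fα x B y :=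
        sneg fun x => by rw [hFa x y B]; ring
      have d1 : (if A = y then (if B = z then (1:ℝ) else 0) else 0)
          = (if A = y then (1:ℝ) else 0) * (if B = z then (1:ℝ) else 0) := by
        split_ifs <;> norm_num
      have d2 : (if B = y then (if A = z then (1:ℝ) else 0) else 0)
          = (if B = y then (1:ℝ) else 0) * (if A = z then (1:ℝ) else 0) := by
        split_ifs <;> norm_num
      simp only [FKMIdx.eam.injEq]
      have d3 : (if z = y then (if A = B then (2:ℝ) else 0) else 0)
          = 2 * ((if A = B then (1:ℝ) else 0) * (if z = y then (1:ℝ) else 0)) := by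
        split_ifs <;> norm_num
      linarith [h81, h82, h3, b1, b2, bb, bc, b4, b5, d1, d2, d3]
    case ea.eam z y =>
      have h3 := H3 B A z y
      simp only [Finset.sum_add_distrib] at h3
      have b1 : (∑ x, Fα x B z * Fα x y A) = -∑ x, Fα x z B * Fα x y A :=
        sneg fun x => by rw [hFa x B z]; ring
      have b2 : (∑ x, Fα x A z * Fα x y B) = -∑ x, Fα x z A * Fα x y B :=
        sneg fun x => by rw [hFa x A z]; ring
      have b3 : (∑ x, Fμ x B z * Fμ x y A) = -∑ x, Fμ x z B * Fμ x y A :=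
        sneg fun x => by rw [hFm x B z]; ring
      have b4 : (∑ x, Fμ x A z * Fμ x y B) = -∑ x, Fμ x z A * Fμ x y B :=
        sneg fun x => by rw [hFm x A z]; ring
      have hR : (FKMIdx.ea z : FKMIdx m N) ≠ FKMIdx.eam y := by simp
      rw [if_neg hR]
      linarith [h3, b1, b2, b3, b4]
    case eam.ea z y =>
      have h3 := H3 B A z y
      simp only [Finset.sum_add_distrib] at h3
      have b1 : (∑ x, Fα x z B * Fα x A y) = -∑ x, Fα x z B * Fα x y A :=
        sneg fun x => by rw [hFa x A y]; ring
      have b2 : (∑ x, Fα x z A * Fα x B y) = -∑ x, Fα x z A * Fα x y B :=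
        sneg fun x => by rw [hFa x B y]; ring
      have b3 : (∑ x, Fμ x z B * Fμ x A y) = -∑ x, Fμ x z B * Fμ x y A :=
        sneg fun x => by rw [hFm x A y]; ring
      have b4 : (∑ x, Fμ x z A * Fμ x B y) = -∑ x, Fμ x z A * Fμ x y B :=
        sneg fun x => by rw [hFm x B y]; ring
      have hR : (FKMIdx.eam z : FKMIdx m N) ≠ FKMIdx.ea y := by simp
      rw [if_neg hR]
      linarith [h3, b1, b2, b3, b4]
    case ea.eal z β =>
      have h6 := H6 β A B z
      simp only [Finset.sum_add_distrib, mul_add] at h6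
      have b1 : (∑ x, L x B z * Fα β x A) = ∑ x, Fα β x A * L x B z :=
        sum_congr' fun x => mul_comm _ _
      have b2 : (∑ x, L x A z * Fα β x B) = ∑ x, Fα β x B * L x A z :=
        sum_congr' fun x => mul_comm _ _
      have b3 : (∑ x, Fμ x B z * (2 * G x β A)) = (-2) * ∑ x, G x β A * Fμ x z B :=
        sum_smul_congr (-2) fun x => by rw [hFm x B z]; ring
      have b4 : (∑ x, Fμ x A z * (2 * G x β B)) = (-2) * ∑ x, G x β B * Fμ x z A :=
        sum_smul_congr (-2) fun x => by rw [hFm x A z]; ring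
      have hR : (FKMIdx.ea z : FKMIdx m N) ≠ FKMIdx.eal β := by simp
      rw [if_neg hR]
      linarith [h6, b1, b2, b3, b4]
    case ea.emu z ν =>
      have h7 := H7 ν A B z
      simp only [Finset.sum_add_distrib, mul_add] at h7
      have b1 : (∑ x, L x B z * Fμ ν x A) = ∑ x, Fμ ν x A * L x B z :=
        sum_congr' fun x => mul_comm _ _
      have b2 : (∑ x, L x A z * Fμ ν x B) = ∑ x, Fμ ν x B * L x A z :=
        sum_congr' fun x => mul_comm _ _
      have b3 : (∑ x, Fα x B z * (2 * G ν x A)) = 2 * ∑ x, Fα x B z * G ν x A :=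
        sum_smul_congr 2 fun x => by ring
      have b4 : (∑ x, Fα x A z * (2 * G ν x B)) = 2 * ∑ x, Fα x A z * G ν x B :=
        sum_smul_congr 2 fun x => by ring
      have hR : (FKMIdx.ea z : FKMIdx m N) ≠ FKMIdx.emu ν := by simp
      rw [if_neg hR]
      linarith [h7, b1, b2, b3, b4]
    case eam.eal z β =>
      have h6 := H6 β A B z
      simp only [Finset.sum_add_distrib, mul_add] at h6
      have b1 : (∑ x, L x B z * Fα β A x) = -∑ x, Fα β x A * L x B z :=
        sneg fun x => by rw [hFa β A x]; ring
      have b2 : (∑ x, L x A z * Fα β B x) = -∑ x, Fα β x B * L x A z :=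
        sneg fun x => by rw [hFa β B x]; ring
      have b3 : (∑ x, Fμ x z B * (2 * G x β A)) = 2 * ∑ x, G x β A * Fμ x z B :=
        sum_smul_congr 2 fun x => by ring
      have b4 : (∑ x, Fμ x z A * (2 * G x β B)) = 2 * ∑ x, G x β B * Fμ x z A :=
        sum_smul_congr 2 fun x => by ring
      have hR : (FKMIdx.eam z : FKMIdx m N) ≠ FKMIdx.eal β := by simp
      rw [if_neg hR]
      linarith [h6, b1, b2, b3, b4]
    case eam.emu z ν =>
      have h7 := H7 ν A B z
      simp only [Finset.sum_add_distrib, mul_add] at h7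
      have b1 : (∑ x, L x B z * Fμ ν A x) = -∑ x, Fμ ν x A * L x B z :=
        sneg fun x => by rw [hFm ν A x]; ring
      have b2 : (∑ x, L x A z * Fμ ν B x) = -∑ x, Fμ ν x B * L x A z :=
        sneg fun x => by rw [hFm ν B x]; ring
      have b3 : (∑ x, Fα x z B * (2 * G ν x A)) = (-2) * ∑ x, Fα x B z * G ν x A :=
        sum_smul_congr (-2) fun x => by rw [hFa x z B]; ring
      have b4 : (∑ x, Fα x z A * (2 * G ν x B)) = (-2) * ∑ x, Fα x A z * G ν x B :=
        sum_smul_congr (-2) fun x => by rw [hFa x z A]; ring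
      have hR : (FKMIdx.eam z : FKMIdx m N) ≠ FKMIdx.emu ν := by simp
      rw [if_neg hR]
      linarith [h7, b1, b2, b3, b4]
    case eal.ea β y =>
      have h6 := H6 β B A y
      simp only [Finset.sum_add_distrib, mul_add] at h6
      have b1 : (∑ x, Fα β x B * L y A x) = -∑ x, Fα β x B * L x A y :=
        sneg fun x => by rw [hLcyc y A x, hL12 A x y]; ring
      have b2 : (∑ x, Fα β x A * L y B x) = -∑ x, Fα β x A * L x B y :=
        sneg fun x => by rw [hLcyc y B x, hL12 B x y]; ring
      have b3 : (∑ x, 2 * G x β B * Fμ x A y) = (-2) * ∑ x, G x β B * Fμ x y A :=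
        sum_smul_congr (-2) fun x => by rw [hFm x A y]; ring
      have b4 : (∑ x, 2 * G x β A * Fμ x B y) = (-2) * ∑ x, G x β A * Fμ x y B :=
        sum_smul_congr (-2) fun x => by rw [hFm x B y]; ring
      have hR : (FKMIdx.eal β : FKMIdx m N) ≠ FKMIdx.ea y := by simp
      rw [if_neg hR]
      linarith [h6, b1, b2, b3, b4]
    case eal.eam β y =>
      have h6 := H6 β B A y
      simp only [Finset.sum_add_distrib, mul_add] at h6
      have b1 : (∑ x, Fα β B x * L y A x) = ∑ x, Fα β x B * L x A y :=
        sum_congr' fun x => by rw [hFa β B x, hLcyc y A x, hL12 A x y]; ring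
      have b2 : (∑ x, Fα β A x * L y B x) = ∑ x, Fα β x A * L x B y :=
        sum_congr' fun x => by rw [hFa β A x, hLcyc y B x, hL12 B x y]; ring
      have b3 : (∑ x, 2 * G x β B * Fμ x y A) = 2 * ∑ x, G x β B * Fμ x y A :=
        sum_smul_congr 2 fun x => by ring
      have b4 : (∑ x, 2 * G x β A * Fμ x y B) = 2 * ∑ x, G x β A * Fμ x y B :=
        sum_smul_congr 2 fun x => by ring
      have hR : (FKMIdx.eal β : FKMIdx m N) ≠ FKMIdx.eam y := by simp
      rw [if_neg hR]
      linarith [h6, b1, b2, b3, b4]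
    case emu.ea ν y =>
      have h7 := H7 ν B A y
      simp only [Finset.sum_add_distrib, mul_add] at h7
      have b1 : (∑ x, Fμ ν x B * L y A x) = -∑ x, Fμ ν x B * L x A y :=
        sneg fun x => by rw [hLcyc y A x, hL12 A x y]; ring
      have b2 : (∑ x, Fμ ν x A * L y B x) = -∑ x, Fμ ν x A * L x B y :=
        sneg fun x => by rw [hLcyc y B x, hL12 B x y]; ring
      have b3 : (∑ x, 2 * G ν x B * Fα x A y) = 2 * ∑ x, Fα x A y * G ν x B :=
        sum_smul_congr 2 fun x => by ring
      have b4 : (∑ x, 2 * G ν x A * Fα x B y) = 2 * ∑ x, Fα x B y * G ν x A :=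
        sum_smul_congr 2 fun x => by ring
      have hR : (FKMIdx.emu ν : FKMIdx m N) ≠ FKMIdx.ea y := by simp
      rw [if_neg hR]
      linarith [h7, b1, b2, b3, b4]
    case emu.eam ν y =>
      have h7 := H7 ν B A y
      simp only [Finset.sum_add_distrib, mul_add] at h7
      have b1 : (∑ x, Fμ ν B x * L y A x) = ∑ x, Fμ ν x B * L x A y :=
        sum_congr' fun x => by rw [hFm ν B x, hLcyc y A x, hL12 A x y]; ring
      have b2 : (∑ x, Fμ ν A x * L y B x) = ∑ x, Fμ ν x A * L x B y :=
        sum_congr' fun x => by rw [hFm ν A x, hLcyc y B x, hL12 B x y]; ring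
      have b3 : (∑ x, 2 * G ν x B * Fα x y A) = (-2) * ∑ x, Fα x A y * G ν x B :=
        sum_smul_congr (-2) fun x => by rw [hFa x y A]; ring
      have b4 : (∑ x, 2 * G ν x A * Fα x y B) = (-2) * ∑ x, Fα x B y * G ν x A :=
        sum_smul_congr (-2) fun x => by rw [hFa x y B]; ring
      have hR : (FKMIdx.emu ν : FKMIdx m N) ≠ FKMIdx.eam y := by simp
      rw [if_neg hR]
      linarith [h7, b1, b2, b3, b4]
    case eal.eal β γ =>
      have h4 := H4 β γ B A
      simp only [Finset.sum_add_distrib, mul_add] at h4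
      have b1 : (∑ x, Fα β B x * Fα γ A x) = ∑ x, Fα β x B * Fα γ x A :=
        sum_congr' fun x => by rw [hFa β B x, hFa γ A x]; ring
      have b2 : (∑ x, Fα β A x * Fα γ B x) = ∑ x, Fα β x A * Fα γ x B :=
        sum_congr' fun x => by rw [hFa β A x, hFa γ B x]; ring
      have b3 : (∑ x, 2 * G x β B * (2 * G x γ A)) = 4 * ∑ x, G x β B * G x γ A :=
        sum_smul_congr 4 fun x => by ring
      have b4 : (∑ x, 2 * G x β A * (2 * G x γ B)) = 4 * ∑ x, G x β A * G x γ B :=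
        sum_smul_congr 4 fun x => by ring
      simp only [FKMIdx.eal.injEq]
      have d : (if β = γ then (if A = B then (2:ℝ) else 0) else 0)
          = 2 * ((if β = γ then (1:ℝ) else 0) * (if B = A then (1:ℝ) else 0)) := by
        rw [ite_flip B A (1:ℝ)]; split_ifs <;> norm_num
      linarith [h4, b1, b2, b3, b4, d]
    case emu.emu μ1 μ2 =>
      have h5 := H5 μ1 μ2 B A
      simp only [Finset.sum_add_distrib, mul_add] at h5
      have b1 : (∑ x, Fμ μ1 B x * Fμ μ2 A x) = ∑ x, Fμ μ1 x B * Fμ μ2 x A :=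
        sum_congr' fun x => by rw [hFm μ1 B x, hFm μ2 A x]; ring
      have b2 : (∑ x, Fμ μ1 A x * Fμ μ2 B x) = ∑ x, Fμ μ1 x A * Fμ μ2 x B :=
        sum_congr' fun x => by rw [hFm μ1 A x, hFm μ2 B x]; ring
      have b3 : (∑ x, 2 * G μ1 x B * (2 * G μ2 x A)) = 4 * ∑ x, G μ1 x B * G μ2 x A :=
        sum_smul_congr 4 fun x => by ring
      have b4 : (∑ x, 2 * G μ1 x A * (2 * G μ2 x B)) = 4 * ∑ x, G μ1 x A * G μ2 x B :=
        sum_smul_congr 4 fun x => by ring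
      simp only [FKMIdx.emu.injEq]
      have d : (if μ1 = μ2 then (if A = B then (2:ℝ) else 0) else 0)
          = 2 * ((if μ1 = μ2 then (1:ℝ) else 0) * (if B = A then (1:ℝ) else 0)) := by
        rw [ite_flip B A (1:ℝ)]; split_ifs <;> norm_num
      linarith [h5, b1, b2, b3, b4, d]
    case eal.emu β ν =>
      have b1 : (∑ x, Fα β B x * Fμ ν A x) = ∑ x, Fα β x B * Fμ ν x A :=
        sum_congr' fun x => by rw [hFa β B x, hFm ν A x]; ring
      have b2 : (∑ x, Fα β A x * Fμ ν B x) = ∑ x, Fα β x A * Fμ ν x B :=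
        sum_congr' fun x => by rw [hFa β A x, hFm ν B x]; ring
      have hR : (FKMIdx.eal β : FKMIdx m N) ≠ FKMIdx.emu ν := by simp
      rw [if_neg hR]
      linarith [b1, b2]
    case emu.eal ν γ =>
      have b1 : (∑ x, Fμ ν B x * Fα γ A x) = ∑ x, Fμ ν x B * Fα γ x A :=
        sum_congr' fun x => by rw [hFm ν B x, hFa γ A x]; ring
      have b2 : (∑ x, Fμ ν A x * Fα γ B x) = ∑ x, Fμ ν x A * Fα γ x B :=
        sum_congr' fun x => by rw [hFm ν A x, hFa γ B x]; ring
      have hR : (FKMIdx.emu ν : FKMIdx m N) ≠ FKMIdx.eal γ := by simp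
      rw [if_neg hR]
      linarith [b1, b2]
  have key : ∀ i j p k, (∑ l, (C j p l * C i l k + C i p l * C j l k)) =
      (if i = j then (2:ℝ) else 0) * (if p = k then 1 else 0) := by
    intro i j
    induction i using Fin.cases with
    | zero =>
      induction j using Fin.cases with
      | zero =>
        intro p k
        simp only [hC0]
        cases p <;> cases k <;>
          simp [sum_idx, C0, ite_mul, mul_ite, Finset.sum_add_distrib, Finset.sum_ite_eq,
            Finset.sum_ite_eq', eq_comm] <;>
          (try norm_num) <;> (try split <;> norm_num)
      | succ B =>
        intro p k
        simp only [hC0, hCSucc]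
        rw [key0S B p k]
        simp [(Fin.succ_ne_zero B).symm]
    | succ A =>
      induction j using Fin.cases with
      | zero =>
        intro p k
        simp only [hC0, hCSucc]
        have h := key0S A p k
        rw [show (∑ l, (C0 m N p l * CS Fα Fμ G L A l k + CS Fα Fμ G L A p l * C0 m N l k)) =
            (∑ l, (CS Fα Fμ G L A p l * C0 m N l k + C0 m N p l * CS Fα Fμ G L A l k)) from
          Finset.sum_congr rfl fun l _ => add_comm _ _, h]
        simp [Fin.succ_ne_zero A]
      | succ B =>
        intro p k
        simp only [hCSucc]
        rw [keySS A B p k]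
        congr 1
        simp [Fin.succ_inj, eq_comm]
  -- inner products with basis vectors
  have horth : ∀ j k : FKMIdx m N, ⟪b j, b k⟫ = if j = k then (1:ℝ) else 0 :=
    orthonormal_iff_ite.mp b.orthonormal
  have hb' : ∀ i j k, ⟪Q i (b j), b k⟫ = C i j k := by
    intro i j k
    rw [hC i j, sum_inner]
    simp only [real_inner_smul_left, horth, mul_ite, mul_one, mul_zero, Finset.sum_ite_eq',
      Finset.mem_univ, if_true]
  have hb2 : ∀ i j k, ⟪b j, Q i (b k)⟫ = C i k j := by
    intro i j k; rw [real_inner_comm]; exact hb' i k j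
  constructor
  · intro i v w
    rw [← b.sum_repr v, ← b.sum_repr w]
    simp only [map_sum, map_smul, sum_inner, inner_sum, real_inner_smul_left,
      real_inner_smul_right, hb', hb2, smul_eq_mul]
    refine Finset.sum_congr rfl fun j _ => Finset.sum_congr rfl fun k _ => ?_
    rw [hCsymm i j k]
  · intro i j
    have expand : ∀ (i j : Fin (m+1)) (p : FKMIdx m N),
        (Q i) ((Q j) (b p)) = ∑ k, (∑ l, C j p l * C i l k) • b k := by
      intro i j p
      rw [hC j p, map_sum]
      simp only [map_smul, hC i, Finset.smul_sum, smul_smul]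
      rw [Finset.sum_comm]
      exact Finset.sum_congr rfl fun k _ => (Finset.sum_smul).symm
    refine b.toBasis.ext fun p => ?_
    simp only [OrthonormalBasis.coe_toBasis]
    have step : (Q i * Q j + Q j * Q i) (b p) =
        ∑ k, ((if i = j then (2:ℝ) else 0) * (if p = k then 1 else 0)) • b k := by
      have h0 : (Q i * Q j + Q j * Q i) (b p) = (Q i) ((Q j) (b p)) + (Q j) ((Q i) (b p)) := rfl
      rw [h0, expand i j p, expand j i p, ← Finset.sum_add_distrib]
      refine Finset.sum_congr rfl fun k _ => ?_
      rw [← add_smul, ← Finset.sum_add_distrib, key i j p k]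
    rw [step]
    by_cases h : i = j <;>
      simp [h, mul_ite, ite_smul, Finset.sum_ite_eq, LinearMap.smul_apply, Module.End.one_apply]
end

section
/- Let m and N be positive integers with m < N. For each a ∈ {1, …, m} let A_a be an N×N real matrix and B_a an N×m real matrix, and suppose that for all a, b ∈ {1, …, m}: B_a B_bᵀ + B_b B_aᵀ + (1/2)(A_a A_bᵀ + A_b A_aᵀ) = δ_{ab} I_N. Then the matrices A_1, …, A_m are linearly independent in the space of N×N real matrices. -/
open Matrix

lemma sum_smul_mul_sum_smul {m N k l : ℕ} (g : Fin m → ℝ)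
    (M : Fin m → Matrix (Fin N) (Fin k) ℝ) (P : Fin m → Matrix (Fin k) (Fin l) ℝ) :
    (∑ a, g a • M a) * (∑ b, g b • P b) =
      ∑ a, ∑ b, (g a * g b) • (M a * P b) := by
  rw [Matrix.sum_mul]
  refine Finset.sum_congr rfl fun a _ => ?_
  rw [Matrix.mul_sum]
  refine Finset.sum_congr rfl fun b _ => ?_
  rw [Matrix.smul_mul, Matrix.mul_smul, smul_smul]

/-- **Proposition 8.4 (pointwise algebraic content).**
Let `m < N` and suppose the `N×N` matrices `A a` and `N×m` matrices `B a`
(`a = 1,…,m`) satisfy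
`B a * (B b)ᵀ + B b * (B a)ᵀ + (1/2) (A a * (A b)ᵀ + A b * (A a)ᵀ) = δ_{ab} I`.
Then `A 1, …, A m` are linearly independent. -/
theorem stmt6 (m N : ℕ) (hm : 0 < m) (hN : 0 < N) (hmN : m < N)
    (A : Fin m → Matrix (Fin N) (Fin N) ℝ)
    (B : Fin m → Matrix (Fin N) (Fin m) ℝ)
    (h : ∀ a b, B a * (B b)ᵀ + B b * (B a)ᵀ +
      (1 / 2 : ℝ) • (A a * (A b)ᵀ + A b * (A a)ᵀ) =
      if a = b then (1 : Matrix (Fin N) (Fin N) ℝ) else 0) :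
    LinearIndependent ℝ A := by
  rw [Fintype.linearIndependent_iff]
  intro g hg
  by_contra hcon
  push_neg at hcon
  obtain ⟨i, hi⟩ := hcon
  set c : ℝ := ∑ a, g a ^ 2 with hc
  have hcpos : 0 < c := by
    refine Finset.sum_pos' (fun a _ => sq_nonneg _) ⟨i, Finset.mem_univ i, by positivity⟩
  set S : Matrix (Fin N) (Fin m) ℝ := ∑ a, g a • B a with hS
  set T : Matrix (Fin N) (Fin N) ℝ := ∑ a, g a • A a with hT
  have hT0 : T = 0 := hg
  have hSt : Sᵀ = ∑ a, g a • (B a)ᵀ := by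
    rw [hS, transpose_sum]
    exact Finset.sum_congr rfl fun a _ => transpose_smul _ _
  have hTt : Tᵀ = ∑ a, g a • (A a)ᵀ := by
    rw [hT, transpose_sum]
    exact Finset.sum_congr rfl fun a _ => transpose_smul _ _
  have hSS : S * Sᵀ = ∑ a, ∑ b, (g a * g b) • (B a * (B b)ᵀ) := by
    rw [hS, hSt, sum_smul_mul_sum_smul]
  have hSS' : S * Sᵀ = ∑ a, ∑ b, (g a * g b) • (B b * (B a)ᵀ) := by
    rw [hSS, Finset.sum_comm]
    exact Finset.sum_congr rfl fun a _ => Finset.sum_congr rfl fun b _ => by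
      rw [mul_comm (g a)]
  have hTT : T * Tᵀ = ∑ a, ∑ b, (g a * g b) • (A a * (A b)ᵀ) := by
    rw [hT, hTt, sum_smul_mul_sum_smul]
  have hTT' : T * Tᵀ = ∑ a, ∑ b, (g a * g b) • (A b * (A a)ᵀ) := by
    rw [hTT, Finset.sum_comm]
    exact Finset.sum_congr rfl fun a _ => Finset.sum_congr rfl fun b _ => by
      rw [mul_comm (g a)]
  have key : (2:ℝ) • (S * Sᵀ) = c • (1 : Matrix (Fin N) (Fin N) ℝ) := by
    have lhs : ∑ a, ∑ b, (g a * g b) • (B a * (B b)ᵀ + B b * (B a)ᵀ +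
        (1 / 2 : ℝ) • (A a * (A b)ᵀ + A b * (A a)ᵀ)) =
        (2:ℝ) • (S * Sᵀ) + (1 / 2 : ℝ) • (T * Tᵀ + T * Tᵀ) := by
      simp only [smul_add, Finset.sum_add_distrib, smul_comm (_ * _) (1/2 : ℝ)]
      simp only [← Finset.smul_sum]
      rw [← hSS, ← hSS', ← hTT, ← hTT']
      module
    have rhs : ∑ a, ∑ b, (g a * g b) •
        (if a = b then (1 : Matrix (Fin N) (Fin N) ℝ) else 0) =
        c • (1 : Matrix (Fin N) (Fin N) ℝ) := by
      rw [hc, Finset.sum_smul]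
      refine Finset.sum_congr rfl fun a _ => ?_
      rw [Finset.sum_eq_single a]
      · simp [sq]
      · intro b _ hb
        simp [Ne.symm hb]
      · simp
    calc (2:ℝ) • (S * Sᵀ)
        = (2:ℝ) • (S * Sᵀ) + (1 / 2 : ℝ) • (T * Tᵀ + T * Tᵀ) := by
          rw [hT0]; simp
      _ = c • (1 : Matrix (Fin N) (Fin N) ℝ) := by
          rw [← lhs, ← rhs]
          exact Finset.sum_congr rfl fun a _ => Finset.sum_congr rfl fun b _ => by
            rw [h a b]
  have hone : (1 : Matrix (Fin N) (Fin N) ℝ) = S * ((2 / c) • Sᵀ) := by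
    have h2 : S * Sᵀ = ((1:ℝ) / 2 * c) • (1 : Matrix (Fin N) (Fin N) ℝ) := by
      have h3 := congrArg (fun M : Matrix (Fin N) (Fin N) ℝ => (2:ℝ)⁻¹ • M) key
      simp only [smul_smul] at h3
      norm_num at h3
      exact h3
    rw [Matrix.mul_smul, h2, smul_smul]
    have h4 : (2 / c) * ((1:ℝ) / 2 * c) = 1 := by field_simp
    rw [h4, one_smul]
  have hrank : (1 : Matrix (Fin N) (Fin N) ℝ).rank ≤ m := by
    rw [hone]
    exact (Matrix.rank_mul_le_left _ _).trans ((Matrix.rank_le_card_width S).trans (by simp))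
  rw [Matrix.rank_one] at hrank
  simp at hrank
  omega
end

section
/- Let m1, m2 be positive integers, let A be an m2×m2 real matrix, and let B and C be m2×m1 real matrices. Let S be the symmetric square matrix of size 2·m2 + m1 given in block form by S = [[0, A, B], [Aᵀ, 0, C], [Bᵀ, Cᵀ, 0]]. If rank S = 2·m2, then rank A ≥ m2 − m1. -/
open Matrix

lemma my_rank_add_le {m n : Type*} [Fintype m] [Fintype n] (X Y : Matrix m n ℝ) :
    (X + Y).rank ≤ X.rank + Y.rank := by
  rw [Matrix.rank, Matrix.rank, Matrix.rank, Matrix.mulVecLin_add]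
  have h : LinearMap.range (X.mulVecLin + Y.mulVecLin) ≤
      LinearMap.range X.mulVecLin ⊔ LinearMap.range Y.mulVecLin := by
    rintro _ ⟨v, rfl⟩
    exact Submodule.mem_sup.2 ⟨_, ⟨v, rfl⟩, _, ⟨v, rfl⟩, by simp⟩
  exact (Submodule.finrank_mono h).trans
    (Submodule.finrank_add_le_finrank_add_finrank _ _)

def myE1 (m1 m2 : ℕ) : Matrix (Fin m2 ⊕ (Fin m2 ⊕ Fin m1)) (Fin m2) ℝ :=
  Matrix.of fun r j =>
    match r with
    | Sum.inl i => if i = j then (1 : ℝ) else 0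
    | _ => 0

def myE2 (m1 m2 : ℕ) : Matrix (Fin m2 ⊕ (Fin m2 ⊕ Fin m1)) (Fin m2) ℝ :=
  Matrix.of fun r j =>
    match r with
    | Sum.inr (Sum.inl i) => if i = j then (1 : ℝ) else 0
    | _ => 0

def myE3 (m1 m2 : ℕ) : Matrix (Fin m2 ⊕ (Fin m2 ⊕ Fin m1)) (Fin m1) ℝ :=
  Matrix.of fun r j =>
    match r with
    | Sum.inr (Sum.inr i) => if i = j then (1 : ℝ) else 0
    | _ => 0

def myU (m1 m2 : ℕ) (B C : Matrix (Fin m2) (Fin m1) ℝ) :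
    Matrix (Fin m2 ⊕ (Fin m2 ⊕ Fin m1)) (Fin m1) ℝ :=
  Matrix.of fun r j =>
    match r with
    | Sum.inl i => B i j
    | Sum.inr (Sum.inl i) => C i j
    | _ => 0

/-- **Ozeki–Takeuchi rank estimate (proof of Lemma 9.1).**
Let `S` be the symmetric block matrix `[[0, A, B], [Aᵀ, 0, C], [Bᵀ, Cᵀ, 0]]`
of size `2·m2 + m1`.  If `rank S = 2·m2`, then `rank A ≥ m2 − m1`. -/
theorem stmt7 (m1 m2 : ℕ) (hm1 : 0 < m1) (hm2 : 0 < m2)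
    (A : Matrix (Fin m2) (Fin m2) ℝ)
    (B C : Matrix (Fin m2) (Fin m1) ℝ)
    (S : Matrix (Fin m2 ⊕ (Fin m2 ⊕ Fin m1)) (Fin m2 ⊕ (Fin m2 ⊕ Fin m1)) ℝ)
    (hS : S = Matrix.of fun i j =>
      match i, j with
      | Sum.inl i, Sum.inl _ => (0 : ℝ)
      | Sum.inl i, Sum.inr (Sum.inl j) => A i j
      | Sum.inl i, Sum.inr (Sum.inr j) => B i j
      | Sum.inr (Sum.inl i), Sum.inl j => Aᵀ i j
      | Sum.inr (Sum.inl i), Sum.inr (Sum.inl j) => (0 : ℝ)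
      | Sum.inr (Sum.inl i), Sum.inr (Sum.inr j) => C i j
      | Sum.inr (Sum.inr i), Sum.inl j => Bᵀ i j
      | Sum.inr (Sum.inr i), Sum.inr (Sum.inl j) => Cᵀ i j
      | Sum.inr (Sum.inr i), Sum.inr (Sum.inr j) => (0 : ℝ))
    (hrank : S.rank = 2 * m2) :
    m2 - m1 ≤ A.rank := by
  have hSsum : S = myE1 m1 m2 * A * (myE2 m1 m2)ᵀ + myE2 m1 m2 * Aᵀ * (myE1 m1 m2)ᵀ +
      (myU m1 m2 B C * (myE3 m1 m2)ᵀ + myE3 m1 m2 * (myU m1 m2 B C)ᵀ) := by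
    subst hS
    ext r c
    rcases r with i | i | i <;> rcases c with j | j | j <;>
      simp [myE1, myE2, myE3, myU, Matrix.mul_apply, Matrix.transpose_apply,
        Finset.sum_ite_eq, Finset.sum_ite_eq', ite_mul, mul_ite]
  have h1 : (myE1 m1 m2 * A * (myE2 m1 m2)ᵀ).rank ≤ A.rank :=
    (Matrix.rank_mul_le_left _ _).trans (Matrix.rank_mul_le_right _ _)
  have h2 : (myE2 m1 m2 * Aᵀ * (myE1 m1 m2)ᵀ).rank ≤ A.rank := by
    calc (myE2 m1 m2 * Aᵀ * (myE1 m1 m2)ᵀ).rank ≤ Aᵀ.rank :=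
          (Matrix.rank_mul_le_left _ _).trans (Matrix.rank_mul_le_right _ _)
      _ = A.rank := A.rank_transpose
  have h3 : (myU m1 m2 B C * (myE3 m1 m2)ᵀ).rank ≤ m1 := by
    calc (myU m1 m2 B C * (myE3 m1 m2)ᵀ).rank ≤ (myU m1 m2 B C).rank :=
          Matrix.rank_mul_le_left _ _
      _ ≤ Fintype.card (Fin m1) := (myU m1 m2 B C).rank_le_card_width
      _ = m1 := Fintype.card_fin m1
  have h4 : (myE3 m1 m2 * (myU m1 m2 B C)ᵀ).rank ≤ m1 := by
    calc (myE3 m1 m2 * (myU m1 m2 B C)ᵀ).rank ≤ (myU m1 m2 B C)ᵀ.rank :=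
          Matrix.rank_mul_le_right _ _
      _ ≤ Fintype.card (Fin m1) := (myU m1 m2 B C)ᵀ.rank_le_card_height
      _ = m1 := Fintype.card_fin m1
  have key : S.rank ≤ A.rank + A.rank + (m1 + m1) := by
    rw [hSsum]
    calc (myE1 m1 m2 * A * (myE2 m1 m2)ᵀ + myE2 m1 m2 * Aᵀ * (myE1 m1 m2)ᵀ +
          (myU m1 m2 B C * (myE3 m1 m2)ᵀ + myE3 m1 m2 * (myU m1 m2 B C)ᵀ)).rank
        ≤ (myE1 m1 m2 * A * (myE2 m1 m2)ᵀ + myE2 m1 m2 * Aᵀ * (myE1 m1 m2)ᵀ).rank +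
            (myU m1 m2 B C * (myE3 m1 m2)ᵀ + myE3 m1 m2 * (myU m1 m2 B C)ᵀ).rank :=
          my_rank_add_le _ _
      _ ≤ ((myE1 m1 m2 * A * (myE2 m1 m2)ᵀ).rank + (myE2 m1 m2 * Aᵀ * (myE1 m1 m2)ᵀ).rank) +
            ((myU m1 m2 B C * (myE3 m1 m2)ᵀ).rank + (myE3 m1 m2 * (myU m1 m2 B C)ᵀ).rank) :=
          add_le_add (my_rank_add_le _ _) (my_rank_add_le _ _)
      _ ≤ A.rank + A.rank + (m1 + m1) :=
          add_le_add (add_le_add h1 h2) (add_le_add h3 h4)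
  rw [hrank] at key
  omega
end

section
/- Let L ≥ 1, n ≥ 2, d ≥ 1, and let p_1, …, p_n ∈ ℂ[z_1, …, z_L] be linearly independent homogeneous polynomials, all of degree d. Suppose that p_1, …, p_{n−1} form a regular sequence in ℂ[z_1, …, z_L] and that the ideal (p_1, …, p_{n−1}) is a prime ideal. Then p_1, …, p_n form a regular sequence in ℂ[z_1, …, z_L]. -/
/-!
Write `I` for the ideal generated by the first `n` polynomials and `f` for the last one. Taking
degree-`d` homogeneous components of `f = ∑ cᵢ pᵢ` shows that `f ∈ I` would make `f` a
`ℂ`-linear combination of the `pᵢ`, which linear independence forbids. As `I` is prime, `f ∉ I`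
is a nonzerodivisor modulo `I`; and the whole ideal is proper because all generators have
positive degree, so vanish at the origin.
-/

namespace MvPolynomial

variable {σ R : Type*} [CommSemiring R]

theorem homogeneousComponent_mul_of_isHomogeneous {d : ℕ} (c : MvPolynomial σ R)
    {f : MvPolynomial σ R} (hf : f.IsHomogeneous d) :
    homogeneousComponent d (c * f) = C (coeff 0 c) * f := by
  have hcomp (k : ℕ) : homogeneousComponent d (homogeneousComponent k c * f) =
      if k = 0 then homogeneousComponent k c * f else 0 := by
    rw [homogeneousComponent_of_mem (n := k + d)
      ((homogeneousComponent_isHomogeneous k c).mul hf)]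
    simp only [right_eq_add]
  conv_lhs => rw [← sum_homogeneousComponent c, Finset.sum_mul, map_sum]
  simp [hcomp]

theorem mem_span_of_mem_ideal_span_of_isHomogeneous {s : Set (MvPolynomial σ R)} {d : ℕ}
    (hs : ∀ f ∈ s, f.IsHomogeneous d) {q : MvPolynomial σ R} (hq : q.IsHomogeneous d)
    (h : q ∈ Ideal.span s) : q ∈ Submodule.span R s := by
  obtain ⟨m, c, f, rfl⟩ := Submodule.mem_span_set'.mp h
  rw [← homogeneousComponent_eq_self hq, map_sum]
  refine Submodule.sum_mem _ fun i _ => ?_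
  rw [smul_eq_mul, homogeneousComponent_mul_of_isHomogeneous _ (hs _ (f i).2), ← smul_eq_C_mul]
  exact Submodule.smul_mem _ _ (Submodule.subset_span (f i).2)

theorem ideal_span_ne_top_of_isHomogeneous [Nontrivial R] {s : Set (MvPolynomial σ R)} {d : ℕ}
    (hd : d ≠ 0) (hs : ∀ f ∈ s, f.IsHomogeneous d) : Ideal.span s ≠ ⊤ := by
  refine ne_top_of_le_ne_top (RingHom.ker_ne_top constantCoeff) (Ideal.span_le.mpr fun f hf => ?_)
  exact (hs f hf).coeff_eq_zero (by simpa using hd.symm)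

end MvPolynomial

namespace RingTheory.Sequence

theorem IsWeaklyRegular.isRegular_append_singleton {R : Type*} [CommRing R] {rs : List R} {r : R}
    (hrs : IsWeaklyRegular R rs) (hprime : (Ideal.ofList rs).IsPrime) (hr : r ∉ Ideal.ofList rs)
    (hproper : Ideal.ofList (rs ++ [r]) ≠ ⊤) : IsRegular R (rs ++ [r]) := by
  refine ⟨(isWeaklyRegular_append_iff R rs [r]).mpr ⟨hrs, ?_⟩, ?_⟩
  · rw [isWeaklyRegular_singleton_iff, isSMulRegular_quotient_iff_mem_of_smul_mem]
    intro x hx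
    rw [smul_eq_mul, Ideal.mul_top] at hx ⊢
    exact (hprime.mem_or_mem hx).resolve_left hr
  · rw [smul_eq_mul, Ideal.mul_top]
    exact hproper.symm

end RingTheory.Sequence

theorem stmt11_general (L n d : ℕ) (hd : 1 ≤ d)
    (p : Fin (n + 1) → MvPolynomial (Fin L) ℂ)
    (hhom : ∀ i, (p i).IsHomogeneous d)
    (hlin : LinearIndependent ℂ p)
    (hreg : RingTheory.Sequence.IsRegular (MvPolynomial (Fin L) ℂ)
      (List.ofFn fun i : Fin n => p i.castSucc))
    (hprime : (Ideal.span (Set.range fun i : Fin n => p i.castSucc)).IsPrime) :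
    RingTheory.Sequence.IsRegular (MvPolynomial (Fin L) ℂ) (List.ofFn p) := by
  set q : Fin n → MvPolynomial (Fin L) ℂ := fun i => p i.castSucc
  have hspan : Ideal.ofList (List.ofFn q) = Ideal.span (Set.range q) := by
    simp only [Ideal.ofList, List.mem_ofFn]
    rfl
  have hlast : p (Fin.last n) ∉ Ideal.span (Set.range q) := fun hmem =>
    hlin.notMem_span_image (x := Fin.last n) (s := Set.range Fin.castSucc) (by simp) <| by
      rw [← Set.range_comp]
      exact MvPolynomial.mem_span_of_mem_ideal_span_of_isHomogeneous (by simp [hhom])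
        (hhom _) hmem
  have hproper : Ideal.ofList (List.ofFn p) ≠ ⊤ :=
    MvPolynomial.ideal_span_ne_top_of_isHomogeneous (d := d) (by omega) (by simp [hhom])
  rw [List.ofFn_succ', List.concat_eq_append] at hproper ⊢
  exact hreg.toIsWeaklyRegular.isRegular_append_singleton (hspan ▸ hprime) (hspan ▸ hlast)
    hproper

/-- **Proposition 10.2.**
Let `p 0, …, p n` (with `n ≥ 1`, so at least two polynomials) be linearly
independent homogeneous polynomials of the same degree `d ≥ 1` in
`ℂ[z_1,…,z_L]`.  If the first `n` of them form a regular sequence generating a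
prime ideal, then all `n + 1` of them form a regular sequence. -/
theorem stmt11 (L n d : ℕ) (hL : 1 ≤ L) (hn : 1 ≤ n) (hd : 1 ≤ d)
    (p : Fin (n + 1) → MvPolynomial (Fin L) ℂ)
    (hhom : ∀ i, (p i).IsHomogeneous d)
    (hlin : LinearIndependent ℂ p)
    (hreg : RingTheory.Sequence.IsRegular (MvPolynomial (Fin L) ℂ)
      (List.ofFn fun i : Fin n => p i.castSucc))
    (hprime : (Ideal.span (Set.range fun i : Fin n => p i.castSucc)).IsPrime) :
    RingTheory.Sequence.IsRegular (MvPolynomial (Fin L) ℂ) (List.ofFn p) :=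
  stmt11_general L n d hd p hhom hlin hreg hprime
end
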